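/- arXiv:2602.07710 — 2 statements merged into one kernel-verified Lean document; each statement's English description precedes it below -/
import Mathlib

section
/- Let (X, ρ) be a doubling metric space, let ε, ε', δ, δ' > 0 satisfy 0 < δ < ε and 0 < δ' < ε', and let H be a hypothesis class on X satisfying the r-UUS property for some r > 0. Then H is (ε, ε')-uniformly generatable if and only if H is (δ, δ')-uniformly generatable, and H is (ε, ε')-non-uniformly generatable if and only if H is (δ, δ')-non-uniformly generatable. -/
open Set

namespace Gen

variable {X : Type*}

/-- The support of a hypothesis `h : X → Bool`: its set of positive examples. -/
def supp (h : X → Bool) : Set X := {x | h x = true}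

/-- Closed ball of radius `ε` around `c`, with respect to an explicit distance `ρ`. -/
def ball (ρ : X → X → ℝ) (c : X) (ε : ℝ) : Set X := {y | ρ c y ≤ ε}

/-- Closed `ε`-neighborhood of a set `A`: points whose infimal distance to `A` is `≤ ε`. -/
def setBall (ρ : X → X → ℝ) (A : Set X) (ε : ℝ) : Set X :=
  {y | sInf ((fun a => ρ a y) '' A) ≤ ε}

/-- The `ε`-covering number of `A` with respect to `ρ`, valued in `ℕ∞`
(`⊤` if no finite cover exists). -/
noncomputable def covN (ρ : X → X → ℝ) (ε : ℝ) (A : Set X) : ℕ∞ :=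
  sInf {n : ℕ∞ | ∃ S : Finset X, (S.card : ℕ∞) = n ∧ A ⊆ ⋃ θ ∈ S, ball ρ θ ε}

/-- `H` satisfies the `r`-Uniformly Unbounded Support property w.r.t. `ρ`. -/
def UUS (ρ : X → X → ℝ) (H : Set (X → Bool)) (r : ℝ) : Prop :=
  ∀ h ∈ H, covN ρ r (supp h) = ⊤

/-- The list of the first `s` terms `x 0, …, x (s-1)` of a sequence. -/
def prefList (x : ℕ → X) (s : ℕ) : List X := List.ofFn (fun i : Fin s => x i)

/-- The set of the first `s` terms of a sequence. -/
def prefSet (x : ℕ → X) (s : ℕ) : Set X := x '' Iio s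

/-- `(ε, ε')`-uniform generatability. -/
def UnifGen (ρ : X → X → ℝ) (ε ε' : ℝ) (H : Set (X → Bool)) : Prop :=
  ∃ G : List X → X, ∃ d : ℕ, ∀ h ∈ H, ∀ x : ℕ → X, (∀ i, x i ∈ supp h) →
    ∀ t : ℕ, (d : ℕ∞) ≤ covN ρ ε (prefSet x t) →
      ∀ s ≥ t, G (prefList x s) ∈ supp h \ setBall ρ (prefSet x s) ε'

/-- `(ε, ε')`-non-uniform generatability. -/
def NonUnifGen (ρ : X → X → ℝ) (ε ε' : ℝ) (H : Set (X → Bool)) : Prop :=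
  ∃ G : List X → X, ∀ h ∈ H, ∃ d : ℕ, ∀ x : ℕ → X, (∀ i, x i ∈ supp h) →
    ∀ t : ℕ, (d : ℕ∞) ≤ covN ρ ε (prefSet x t) →
      ∀ s ≥ t, G (prefList x s) ∈ supp h \ setBall ρ (prefSet x s) ε'

/-- `(ε, ε')`-generatability in the limit. -/
def GenInLimit (ρ : X → X → ℝ) (ε ε' : ℝ) (H : Set (X → Bool)) : Prop :=
  ∃ G : List X → X, ∀ h ∈ H, ∀ x : ℕ → X, (∀ i, x i ∈ supp h) →
    supp h ⊆ setBall ρ (range x) ε →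
      ∃ t : ℕ, ∀ s ≥ t, G (prefList x s) ∈ supp h \ setBall ρ (prefSet x s) ε'

/-- The closure `⟨x_1,…,x_t⟩_H` of a finite sample: intersection of the supports of all
hypotheses in the version space. -/
def clos (H : Set (X → Bool)) (l : List X) : Set X :=
  ⋂ h ∈ {h | h ∈ H ∧ ∀ y ∈ l, y ∈ supp h}, supp h

/-- The `(ε, ε')`-closure dimension of `H`, valued in `ℕ∞`. -/
noncomputable def closureDim (ρ : X → X → ℝ) (ε ε' : ℝ) (H : Set (X → Bool)) : ℕ∞ :=
  sSup (insert 0 {d : ℕ∞ | ∃ h ∈ H, ∃ l : List X, (∀ y ∈ l, y ∈ supp h) ∧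
    covN ρ ε {y | y ∈ l} = d ∧ covN ρ ε' (clos H l) ≠ ⊤})

/-- `ρ` is a metric on `X`. -/
def IsMetricDist (ρ : X → X → ℝ) : Prop :=
  (∀ x y, ρ x y = 0 ↔ x = y) ∧ (∀ x y, ρ x y = ρ y x) ∧
    ∀ x y z, ρ x z ≤ ρ x y + ρ y z

/-- `(X, ρ)` is doubling: every closed ball of radius `r` can be covered by at most `M`
closed balls of radius `r / 2`. -/
def Doubling (ρ : X → X → ℝ) : Prop :=
  ∃ M : ℕ, ∀ (x : X) (r : ℝ), 0 < r →
    ∃ S : Finset X, S.card ≤ M ∧ ball ρ x r ⊆ ⋃ θ ∈ S, ball ρ θ (r / 2)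


/-!
Shrinking the scales is easy: by doubling, `covN δ A ≤ K · covN ε A` for a constant `K`, so the
old generator works with threshold `K · d`, and an output more than ε' away from the sample is
a fortiori more than δ' away from it.

Enlarging the scales needs a new generator. Feeding the old generator its own outputs produces a
sequence whose terms are pairwise more than δ' apart. By doubling, the ε'-neighbourhood of the
finite sample is covered by finitely many balls of radius δ'/2, each containing at most one term,
so some term is more than ε' away from the whole sample; the new generator outputs such a term.
-/

section Covering

variable {ρ : X → X → ℝ}

lemma covN_le_card {ε : ℝ} {A : Set X} {S : Finset X} (hS : A ⊆ ⋃ θ ∈ S, ball ρ θ ε) :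
    covN ρ ε A ≤ S.card :=
  sInf_le ⟨S, rfl, hS⟩

lemma exists_cover_card_eq_covN {ε : ℝ} {A : Set X} (h : covN ρ ε A ≠ ⊤) :
    ∃ S : Finset X, (S.card : ℕ∞) = covN ρ ε A ∧ A ⊆ ⋃ θ ∈ S, ball ρ θ ε := by
  have hne : {n : ℕ∞ | ∃ S : Finset X, (S.card : ℕ∞) = n ∧ A ⊆ ⋃ θ ∈ S, ball ρ θ ε}.Nonempty :=
    nonempty_iff_ne_empty.mpr fun he => h (by rw [covN, he, sInf_empty])
  exact csInf_mem hne

lemma ball_mono {c : X} {δ ε : ℝ} (h : δ ≤ ε) : ball ρ c δ ⊆ ball ρ c ε :=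
  fun _ hy => hy.trans h

lemma covN_anti {δ ε : ℝ} (h : δ ≤ ε) (A : Set X) : covN ρ ε A ≤ covN ρ δ A :=
  sInf_le_sInf fun _ ⟨S, hS, hA⟩ => ⟨S, hS, hA.trans (iUnion₂_mono fun _ _ => ball_mono h)⟩

lemma exists_cover_biUnion {δ ε : ℝ} {K : ℕ}
    (hK : ∀ x, ∃ S : Finset X, S.card ≤ K ∧ ball ρ x ε ⊆ ⋃ θ ∈ S, ball ρ θ δ) (P : Finset X) :
    ∃ T : Finset X, T.card ≤ K * P.card ∧ ⋃ p ∈ P, ball ρ p ε ⊆ ⋃ θ ∈ T, ball ρ θ δ := by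
  classical
  choose S hS_card hS_cover using hK
  refine ⟨P.biUnion S, ?_, ?_⟩
  · calc (P.biUnion S).card ≤ ∑ p ∈ P, (S p).card := Finset.card_biUnion_le
      _ ≤ P.card * K := Finset.sum_le_card_nsmul P _ K fun p _ => hS_card p
      _ = K * P.card := Nat.mul_comm _ _
  · intro y hy
    obtain ⟨p, hp, hyp⟩ := mem_iUnion₂.mp hy
    obtain ⟨θ, hθ, hyθ⟩ := mem_iUnion₂.mp (hS_cover p hyp)
    exact mem_iUnion₂.mpr ⟨θ, Finset.mem_biUnion.mpr ⟨p, hp, hθ⟩, hyθ⟩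

lemma Doubling.exists_cover_pow (hdbl : Doubling ρ) :
    ∃ M : ℕ, ∀ (n : ℕ) (x : X) (r : ℝ), 0 < r →
      ∃ S : Finset X, S.card ≤ M ^ n ∧ ball ρ x r ⊆ ⋃ θ ∈ S, ball ρ θ (r / 2 ^ n) := by
  obtain ⟨M, hM⟩ := hdbl
  refine ⟨M, fun n => ?_⟩
  induction n with
  | zero => exact fun x r _ => ⟨{x}, by simp, by simp⟩
  | succ n ih =>
    intro x r hr
    obtain ⟨S, hS_card, hS_cover⟩ := ih x r hr
    obtain ⟨T, hT_card, hT_cover⟩ :=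
      exists_cover_biUnion (fun θ => hM θ (r / 2 ^ n) (by positivity)) S
    refine ⟨T, ?_, ?_⟩
    · calc T.card ≤ M * S.card := hT_card
        _ ≤ M * M ^ n := Nat.mul_le_mul_left M hS_card
        _ = M ^ (n + 1) := (pow_succ' M n).symm
    · rw [pow_succ, ← div_div]
      exact hS_cover.trans hT_cover

lemma Doubling.exists_cover_ball (hdbl : Doubling ρ) {δ ε : ℝ} (hδ : 0 < δ) (hε : 0 < ε) :
    ∃ K : ℕ, ∀ x, ∃ S : Finset X, S.card ≤ K ∧ ball ρ x ε ⊆ ⋃ θ ∈ S, ball ρ θ δ := by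
  obtain ⟨M, hM⟩ := hdbl.exists_cover_pow
  obtain ⟨n, hn⟩ := exists_pow_lt_of_lt_one (div_pos hδ hε) (by norm_num : (1 / 2 : ℝ) < 1)
  have hn' : ε / 2 ^ n ≤ δ :=
    calc ε / 2 ^ n = (1 / 2) ^ n * ε := by rw [one_div_pow]; ring
      _ ≤ δ / ε * ε := by gcongr
      _ = δ := div_mul_cancel₀ δ hε.ne'
  refine ⟨M ^ n, fun x => ?_⟩
  obtain ⟨S, hS_card, hS_cover⟩ := hM n x ε hε
  exact ⟨S, hS_card, hS_cover.trans (iUnion₂_mono fun _ _ => ball_mono hn')⟩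

lemma Doubling.exists_covN_le_mul (hdbl : Doubling ρ) {δ ε : ℝ} (hδ : 0 < δ) (hε : 0 < ε) :
    ∃ K : ℕ, 0 < K ∧ ∀ A : Set X, covN ρ δ A ≤ K * covN ρ ε A := by
  obtain ⟨K, hK⟩ := hdbl.exists_cover_ball hδ hε
  have hK' : ∀ x, ∃ S : Finset X, S.card ≤ K + 1 ∧ ball ρ x ε ⊆ ⋃ θ ∈ S, ball ρ θ δ :=
    fun x => (hK x).imp fun _ hS => ⟨hS.1.trans K.le_succ, hS.2⟩
  refine ⟨K + 1, K.succ_pos, fun A => ?_⟩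
  by_cases htop : covN ρ ε A = ⊤
  · rw [htop, ENat.mul_top (by exact_mod_cast K.succ_ne_zero)]
    exact le_top
  obtain ⟨P, hP_card, hP_cover⟩ := exists_cover_card_eq_covN htop
  obtain ⟨T, hT_card, hT_cover⟩ := exists_cover_biUnion hK' P
  calc covN ρ δ A ≤ T.card := covN_le_card (hP_cover.trans hT_cover)
    _ ≤ ((K + 1) * P.card : ℕ) := by exact_mod_cast hT_card
    _ = (K + 1 : ℕ) * covN ρ ε A := by rw [← hP_card]; push_cast; rfl

end Covering

section Separation

variable [PseudoMetricSpace X]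

theorem Doubling.exists_far_of_separated (hdbl : Doubling (dist : X → X → ℝ)) {δ ε : ℝ}
    (hδ : 0 < δ) (hε : 0 < ε) (P : Finset X) {f : ℕ → X}
    (hf : Pairwise fun i j => δ < dist (f i) (f j)) : ∃ j, ∀ p ∈ P, ε < dist p (f j) := by
  obtain ⟨K, hK⟩ := hdbl.exists_cover_ball (half_pos hδ) hε
  obtain ⟨T, -, hT⟩ := exists_cover_biUnion hK P
  by_contra! hnear
  have hcenter : ∀ j, ∃ θ : T, dist (θ : X) (f j) ≤ δ / 2 := fun j => by
    obtain ⟨p, hp, hpj⟩ := hnear j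
    obtain ⟨θ, hθ, hθj⟩ := mem_iUnion₂.mp (hT (mem_iUnion₂.mpr ⟨p, hp, hpj⟩))
    exact ⟨⟨θ, hθ⟩, hθj⟩
  choose c hc using hcenter
  -- infinitely many terms, finitely many centres
  obtain ⟨i, j, hij, hcij⟩ := Finite.exists_ne_map_eq_of_infinite c
  have hclose : dist (f i) (f j) ≤ δ :=
    calc dist (f i) (f j) ≤ dist (c i : X) (f i) + dist (c j : X) (f j) := by
          rw [hcij]; exact dist_triangle_left _ _ _
      _ ≤ δ / 2 + δ / 2 := add_le_add (hc i) (hc j)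
      _ = δ := add_halves δ
  exact (hf hij).not_ge hclose

end Separation

section Neighbourhood

variable {ρ : X → X → ℝ}

lemma setBall_mono {A : Set X} {δ ε : ℝ} (h : δ ≤ ε) : setBall ρ A δ ⊆ setBall ρ A ε :=
  fun _ hy => hy.trans h

-- `sInf ∅ = 0` in `ℝ`, so every point is within distance `ε ≥ 0` of the empty set.
lemma setBall_empty {ε : ℝ} (hε : 0 ≤ ε) : setBall ρ ∅ ε = univ := by
  ext y
  simp [setBall, Real.sInf_empty, hε]

lemma notMem_setBall_iff {A : Set X} (hA : A.Finite) (hne : A.Nonempty) {z : X} {ε : ℝ} :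
    z ∉ setBall ρ A ε ↔ ∀ a ∈ A, ε < ρ a z := by
  simp only [setBall, mem_ofPred_eq, not_le, (hA.image _).lt_csInf_iff (hne.image _),
    forall_mem_image]

end Neighbourhood

section Prefix

lemma prefSet_finite (x : ℕ → X) (s : ℕ) : (prefSet x s).Finite :=
  (finite_Iio s).image x

lemma prefSet_nonempty {x : ℕ → X} {s : ℕ} (hs : 0 < s) : (prefSet x s).Nonempty :=
  ⟨x 0, 0, hs, rfl⟩

lemma prefSet_zero (x : ℕ → X) : prefSet x 0 = ∅ := by
  simp [prefSet]

lemma mem_prefSet {x : ℕ → X} {s : ℕ} {a : X} : a ∈ prefSet x s ↔ ∃ i < s, x i = a := by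
  simp [prefSet]

lemma mem_prefList {x : ℕ → X} {s : ℕ} {a : X} : a ∈ prefList x s ↔ a ∈ prefSet x s := by
  simp only [prefList, List.mem_ofFn, mem_prefSet]
  exact ⟨fun ⟨i, hi⟩ => ⟨i, i.isLt, hi⟩, fun ⟨i, hi, hia⟩ => ⟨⟨i, hi⟩, hia⟩⟩

lemma prefList_congr {x y : ℕ → X} {s : ℕ} (h : ∀ i < s, x i = y i) :
    prefList x s = prefList y s :=
  congrArg List.ofFn (funext fun i => h i i.isLt)

lemma prefSet_congr {x y : ℕ → X} {s : ℕ} (h : ∀ i < s, x i = y i) :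
    prefSet x s = prefSet y s :=
  image_congr fun i hi => h i hi

lemma prefList_succ (x : ℕ → X) (s : ℕ) : prefList x (s + 1) = prefList x s ++ [x s] := by
  rw [prefList, prefList, List.ofFn_succ', List.concat_eq_append]
  simp

end Prefix

def GeneratesFrom (ρ : X → X → ℝ) (ε ε' : ℝ) (G : List X → X) (d : ℕ) (h : X → Bool) : Prop :=
  ∀ x : ℕ → X, (∀ i, x i ∈ supp h) →
    ∀ t : ℕ, (d : ℕ∞) ≤ covN ρ ε (prefSet x t) →
      ∀ s ≥ t, G (prefList x s) ∈ supp h \ setBall ρ (prefSet x s) ε'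

lemma unifGen_iff_generatesFrom {ρ : X → X → ℝ} {ε ε' : ℝ} {H : Set (X → Bool)} :
    UnifGen ρ ε ε' H ↔ ∃ G d, ∀ h ∈ H, GeneratesFrom ρ ε ε' G d h :=
  Iff.rfl

lemma nonUnifGen_iff_generatesFrom {ρ : X → X → ℝ} {ε ε' : ℝ} {H : Set (X → Bool)} :
    NonUnifGen ρ ε ε' H ↔ ∃ G, ∀ h ∈ H, ∃ d, GeneratesFrom ρ ε ε' G d h :=
  Iff.rfl

def iterGen (G : List X → X) (l : List X) : ℕ → List X
  | 0 => l
  | j + 1 => iterGen G l j ++ [G (iterGen G l j)]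

def extendSeq (G : List X → X) (x : ℕ → X) (s n : ℕ) : X :=
  if n < s then x n else G (iterGen G (prefList x s) (n - s))

open Classical in
noncomputable def farGen (ρ : X → X → ℝ) (G : List X → X) (ε' : ℝ) (l : List X) : X :=
  if hfar : ∃ j, ∀ a ∈ l, ε' < ρ a (G (iterGen G l j)) then G (iterGen G l hfar.choose)
  else G l

section ExtendSeq

variable {G : List X → X} {x : ℕ → X} {s : ℕ}

lemma extendSeq_of_lt {n : ℕ} (hn : n < s) : extendSeq G x s n = x n :=
  if_pos hn

lemma extendSeq_add (j : ℕ) : extendSeq G x s (s + j) = G (iterGen G (prefList x s) j) := by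
  simp [extendSeq]

lemma prefList_extendSeq (j : ℕ) :
    prefList (extendSeq G x s) (s + j) = iterGen G (prefList x s) j := by
  induction j with
  | zero => exact prefList_congr fun i hi => extendSeq_of_lt hi
  | succ j ih => rw [← add_assoc, prefList_succ, ih, extendSeq_add, iterGen]

lemma extendSeq_eq_generated {n : ℕ} (hn : s ≤ n) :
    extendSeq G x s n = G (prefList (extendSeq G x s) n) := by
  obtain ⟨j, rfl⟩ := Nat.exists_eq_add_of_le hn
  rw [prefList_extendSeq, extendSeq_add]

end ExtendSeq

namespace GeneratesFrom

variable {ρ : X → X → ℝ} {ε ε' : ℝ} {G : List X → X} {d : ℕ} {h : X → Bool}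

lemma pos_of_le_covN (hG : GeneratesFrom ρ ε ε' G d h) (hε' : 0 ≤ ε') {x : ℕ → X}
    (hx : ∀ i, x i ∈ supp h) {t : ℕ} (ht : (d : ℕ∞) ≤ covN ρ ε (prefSet x t)) : 0 < t :=
  Nat.pos_of_ne_zero fun ht0 => by
    subst ht0
    simpa [prefSet_zero, setBall_empty hε'] using hG x hx 0 ht 0 le_rfl

lemma apply_of_prefix (hG : GeneratesFrom ρ ε ε' G d h) {x : ℕ → X} {s t : ℕ} (hs : 0 < s)
    (hx : ∀ i < s, x i ∈ supp h) (hts : t ≤ s) (ht : (d : ℕ∞) ≤ covN ρ ε (prefSet x t)) :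
    G (prefList x s) ∈ supp h \ setBall ρ (prefSet x s) ε' := by
  -- only the first `s` terms are read, so continue the sample by repeating `x 0`
  let x' : ℕ → X := fun i => if i < s then x i else x 0
  have hx'x : ∀ i < s, x' i = x i := fun i hi => if_pos hi
  have hx' : ∀ i, x' i ∈ supp h := fun i => by
    by_cases hi : i < s
    · rw [hx'x i hi]; exact hx i hi
    · rw [show x' i = x 0 from if_neg hi]; exact hx 0 hs
  have hout := hG x' hx' t (by rwa [prefSet_congr fun i hi => hx'x i (hi.trans_le hts)]) s hts
  rwa [prefList_congr hx'x, prefSet_congr hx'x] at hout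

theorem of_covN_le_mul (hG : GeneratesFrom ρ ε ε' G d h) {δ δ' : ℝ} {K : ℕ} (hK : 0 < K)
    (hcov : ∀ A, covN ρ δ A ≤ K * covN ρ ε A) (hδ' : δ' ≤ ε') :
    GeneratesFrom ρ δ δ' G (K * d) h := by
  intro x hx t ht s hst
  have ht' : (d : ℕ∞) ≤ covN ρ ε (prefSet x t) := by
    rw [← ENat.mul_le_mul_left_iff (by exact_mod_cast hK.ne') (ENat.natCast_ne_top K)]
    exact_mod_cast ht.trans (hcov _)
  obtain ⟨hmem, hfar⟩ := hG x hx t ht' s hst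
  exact ⟨hmem, fun hnear => hfar (setBall_mono hδ' hnear)⟩

section Chain

variable {x : ℕ → X} {s t : ℕ}

lemma extendSeq_mem (hG : GeneratesFrom ρ ε ε' G d h) (hs : 0 < s) (hx : ∀ i, x i ∈ supp h)
    (hts : t ≤ s) (ht : (d : ℕ∞) ≤ covN ρ ε (prefSet x t)) (n : ℕ) :
    extendSeq G x s n ∈ supp h := by
  induction n using Nat.strong_induction_on with
  | _ n ih =>
    by_cases hn : n < s
    · rw [extendSeq_of_lt hn]; exact hx n
    · rw [not_lt] at hn
      rw [extendSeq_eq_generated hn]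
      refine (hG.apply_of_prefix (hs.trans_le hn) ih (hts.trans hn) ?_).1
      rwa [prefSet_congr fun i hi => extendSeq_of_lt (hi.trans_le hts)]

lemma iterGen_mem (hG : GeneratesFrom ρ ε ε' G d h) (hs : 0 < s) (hx : ∀ i, x i ∈ supp h)
    (hts : t ≤ s) (ht : (d : ℕ∞) ≤ covN ρ ε (prefSet x t)) (j : ℕ) :
    G (iterGen G (prefList x s) j) ∈ supp h := by
  rw [← extendSeq_add (G := G) (x := x)]
  exact hG.extendSeq_mem hs hx hts ht _

lemma iterGen_separated [PseudoMetricSpace X] (hG : GeneratesFrom dist ε ε' G d h) (hs : 0 < s)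
    (hx : ∀ i, x i ∈ supp h) (hts : t ≤ s) (ht : (d : ℕ∞) ≤ covN dist ε (prefSet x t)) :
    Pairwise fun i j =>
      ε' < dist (G (iterGen G (prefList x s) i)) (G (iterGen G (prefList x s) j)) := by
  have hsep : ∀ {i j}, i < j →
      ε' < dist (G (iterGen G (prefList x s) i)) (G (iterGen G (prefList x s) j)) := by
    intro i j hij
    have hfar : G (prefList (extendSeq G x s) (s + j)) ∉
        setBall dist (prefSet (extendSeq G x s) (s + j)) ε' :=
      (hG.apply_of_prefix (Nat.add_pos_left hs j) (fun n _ => hG.extendSeq_mem hs hx hts ht n)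
        (le_add_right hts) (by rwa [prefSet_congr fun n hn => extendSeq_of_lt (hn.trans_le hts)])).2
    rw [notMem_setBall_iff (prefSet_finite _ _) (prefSet_nonempty (Nat.add_pos_left hs j)),
      prefList_extendSeq] at hfar
    exact hfar _ (mem_prefSet.mpr ⟨s + i, by omega, extendSeq_add i⟩)
  intro i j hij
  rcases hij.lt_or_gt with hlt | hgt
  · exact hsep hlt
  · rw [dist_comm]; exact hsep hgt

end Chain

theorem to_farGen [PseudoMetricSpace X] {δ δ' : ℝ} (hG : GeneratesFrom dist δ δ' G d h)
    (hdbl : Doubling (dist : X → X → ℝ)) (hδ' : 0 < δ') (hε' : 0 < ε') (hδε : δ ≤ ε) :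
    GeneratesFrom dist ε ε' (farGen dist G ε') d h := by
  classical
  intro x hx t ht s hst
  have ht' : (d : ℕ∞) ≤ covN dist δ (prefSet x t) := ht.trans (covN_anti hδε _)
  have hs : 0 < s := (hG.pos_of_le_covN hδ'.le hx ht').trans_le hst
  obtain ⟨j, hj⟩ := hdbl.exists_far_of_separated hδ' hε' ((Finset.range s).image x)
    (hG.iterGen_separated hs hx hst ht')
  have hfar : ∃ j, ∀ a ∈ prefList x s, ε' < dist a (G (iterGen G (prefList x s) j)) := by
    refine ⟨j, fun a ha => hj a ?_⟩
    obtain ⟨i, hi, rfl⟩ := mem_prefSet.mp (mem_prefList.mp ha)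
    exact Finset.mem_image_of_mem x (Finset.mem_range.mpr hi)
  rw [farGen, dif_pos hfar]
  exact ⟨hG.iterGen_mem hs hx hst ht' _,
    (notMem_setBall_iff (prefSet_finite x s) (prefSet_nonempty hs)).mpr
      fun a ha => hfar.choose_spec a (mem_prefList.mpr ha)⟩

end GeneratesFrom

theorem gen_scale_invariant_of_doubling_general {X : Type*} [MetricSpace X]
    (hdbl : Doubling (dist : X → X → ℝ))
    (ε ε' δ δ' : ℝ) (hδ : 0 < δ) (hδε : δ < ε) (hδ' : 0 < δ') (hδ'ε' : δ' < ε')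
    (H : Set (X → Bool)) :
    (UnifGen dist ε ε' H ↔ UnifGen dist δ δ' H) ∧
      (NonUnifGen dist ε ε' H ↔ NonUnifGen dist δ δ' H) := by
  obtain ⟨K, hK, hcov⟩ := hdbl.exists_covN_le_mul hδ (hδ.trans hδε)
  have shrink {G d h} (hG : GeneratesFrom dist ε ε' G d h) : GeneratesFrom dist δ δ' G (K * d) h :=
    hG.of_covN_le_mul hK hcov hδ'ε'.le
  have enlarge {G d h} (hG : GeneratesFrom dist δ δ' G d h) :
      GeneratesFrom dist ε ε' (farGen dist G ε') d h :=
    hG.to_farGen hdbl hδ' (hδ'.trans hδ'ε') hδε.le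
  simp only [unifGen_iff_generatesFrom, nonUnifGen_iff_generatesFrom]
  refine ⟨⟨?_, ?_⟩, ⟨?_, ?_⟩⟩
  · exact fun ⟨G, d, hG⟩ => ⟨G, K * d, fun h hh => shrink (hG h hh)⟩
  · exact fun ⟨G, d, hG⟩ => ⟨farGen dist G ε', d, fun h hh => enlarge (hG h hh)⟩
  · exact fun ⟨G, hG⟩ => ⟨G, fun h hh => let ⟨d, hd⟩ := hG h hh; ⟨K * d, shrink hd⟩⟩
  · exact fun ⟨G, hG⟩ => ⟨farGen dist G ε', fun h hh => let ⟨d, hd⟩ := hG h hh; ⟨d, enlarge hd⟩⟩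

/-- in a doubling metric space, uniform and non-uniform generatability
are invariant under changing the scale parameters. -/
theorem gen_scale_invariant_of_doubling {X : Type*} [MetricSpace X]
    (hdbl : Doubling (dist : X → X → ℝ))
    (ε ε' δ δ' : ℝ) (hδ : 0 < δ) (hδε : δ < ε) (hδ' : 0 < δ') (hδ'ε' : δ' < ε')
    (H : Set (X → Bool)) (r : ℝ) (hr : 0 < r) (hUUS : UUS dist H r) :
    (UnifGen dist ε ε' H ↔ UnifGen dist δ δ' H) ∧
      (NonUnifGen dist ε ε' H ↔ NonUnifGen dist δ δ' H) :=
  gen_scale_invariant_of_doubling_general hdbl ε ε' δ δ' hδ hδε hδ' hδ'ε' H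

end Gen
end

section
/- In ℓ², for any r > 0 and any ε, ε' with 0 < ε < ε' ≤ r, there exists a hypothesis class H on ℓ² consisting of exactly two hypotheses, satisfying the r-UUS property, that is not (ε, ε')-non-uniformly generatable. -/
open Set

namespace Gen

variable {X : Type*}

/-- The real Hilbert space `ℓ²` of square-summable real sequences. -/
noncomputable abbrev ellTwo : Type := lp (fun _ : ℕ => ℝ) 2

/-!
Both supports consist of the closed ball `B(0, ε')` and a ray, the two rays pointing in opposite
directions; being unbounded, each support has infinite covering number at every scale. A generator
serving both hypotheses must output a point of their intersection `B(0, ε')`, hence within `ε'`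
of `0`. It is defeated by the sequence `0, ε' e₁, ε' e₂, …`: a closed `ε`-ball around `θ` contains
`ε' eᵢ` only if `θᵢ ≥ ε' - ε`, and since `∑ θᵢ² ≤ ‖θ‖² ≤ (ε' + ε)²` this happens for at most
`((ε' + ε) / (ε' - ε))²` indices, so the prefixes have unbounded `ε`-covering numbers.
-/

open Bornology Metric Finset

lemma mem_setBall_of_dist_le [PseudoMetricSpace X] {A : Set X} {a y : X} {ε : ℝ} (ha : a ∈ A)
    (h : dist a y ≤ ε) : y ∈ setBall dist A ε := by
  have hbdd : BddBelow ((fun b => dist b y) '' A) := ⟨0, by rintro _ ⟨b, -, rfl⟩; exact dist_nonneg⟩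
  exact (csInf_le hbdd ⟨a, ha, rfl⟩).trans h

lemma covN_eq_top_of_not_isBounded [PseudoMetricSpace X] {A : Set X} (hA : ¬IsBounded A)
    (r : ℝ) : covN dist r A = ⊤ := by
  refine sInf_eq_top.2 fun n ⟨S, _, hcov⟩ => absurd ?_ hA
  refine ((isBounded_biUnion_finset S).2 fun θ _ =>
    isBounded_closedBall (x := θ) (r := r)).subset ?_
  refine hcov.trans (Set.iUnion₂_mono fun θ _ y hy => ?_)
  simpa [ball, mem_closedBall, dist_comm] using hy

lemma le_covN_of_card_filter_le {ι : Type*} {ρ : X → X → ℝ} {ε : ℝ} {A : Set X} (p : ι → X)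
    (s : Finset ι) (hp : ∀ i ∈ s, p i ∈ A) {K d : ℕ} (hK0 : 0 < K)
    (hK : ∀ θ, #{i ∈ s | ρ θ (p i) ≤ ε} ≤ K) (hd : K * d ≤ #s) : (d : ℕ∞) ≤ covN ρ ε A := by
  classical
  refine le_sInf ?_
  rintro _ ⟨S, rfl, hcov⟩
  have hcenter : ∀ i ∈ s, ∃ θ ∈ S, ρ θ (p i) ≤ ε := fun i hi => by
    simpa [ball] using hcov (hp i hi)
  have hcount : #s ≤ K * #S := calc
    #s ≤ #(S.biUnion fun θ => {i ∈ s | ρ θ (p i) ≤ ε}) := card_le_card fun i hi => by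
      obtain ⟨θ, hθS, hθ⟩ := hcenter i hi
      exact mem_biUnion.2 ⟨θ, hθS, mem_filter.2 ⟨hi, hθ⟩⟩
    _ ≤ ∑ θ ∈ S, #{i ∈ s | ρ θ (p i) ≤ ε} := card_biUnion_le
    _ ≤ #S • K := sum_le_card_nsmul _ _ _ fun θ _ => hK θ
    _ = K * #S := by rw [smul_eq_mul, mul_comm]
  exact_mod_cast Nat.le_of_mul_le_mul_left (hd.trans hcount) hK0

lemma not_nonUnifGen_pair_of_exists_seq {ρ : X → X → ℝ} {ε ε' : ℝ} {h₁ h₂ : X → Bool}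
    (hseq : ∀ d : ℕ, ∃ x : ℕ → X, ∃ t, (∀ i, x i ∈ supp h₁ ∩ supp h₂) ∧
      (d : ℕ∞) ≤ covN ρ ε (prefSet x t) ∧ supp h₁ ∩ supp h₂ ⊆ setBall ρ (prefSet x t) ε') :
    ¬ NonUnifGen ρ ε ε' {h₁, h₂} := by
  rintro ⟨G, hG⟩
  obtain ⟨d₁, hd₁⟩ := hG h₁ (Set.mem_insert _ _)
  obtain ⟨d₂, hd₂⟩ := hG h₂ (Set.mem_insert_of_mem _ rfl)
  obtain ⟨x, t, hx, hcov, hnear⟩ := hseq (max d₁ d₂)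
  have hz₁ := hd₁ x (fun i => (hx i).1) t
    ((Nat.cast_le.2 (le_max_left _ _)).trans hcov) t le_rfl
  have hz₂ := hd₂ x (fun i => (hx i).2) t
    ((Nat.cast_le.2 (le_max_right _ _)).trans hcov) t le_rfl
  exact hz₁.2 (hnear ⟨hz₁.1, hz₂.1⟩)

open Classical in
noncomputable def ofSet (S : Set X) : X → Bool := fun x => decide (x ∈ S)

lemma supp_ofSet (S : Set X) : supp (ofSet S) = S := by
  ext; simp [supp, ofSet]

lemma not_isBounded_of_forall_smul_mem {E : Type*} [NormedAddCommGroup E] [NormedSpace ℝ E]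
    {s : Set E} {u : E} (hu : u ≠ 0) (h : ∀ t : ℝ, 0 < t → t • u ∈ s) : ¬IsBounded s := fun hs => by
  obtain ⟨C, hC⟩ := isBounded_iff_forall_norm_le.1 hs
  have ht : 0 < (|C| + 1) / ‖u‖ := by positivity
  have := hC _ (h _ ht)
  rw [norm_smul, Real.norm_of_nonneg ht.le, div_mul_cancel₀ _ (norm_ne_zero_iff.2 hu)] at this
  linarith [le_abs_self C]

lemma exists_not_isBounded_inter_eq_closedBall {E : Type*} [NormedAddCommGroup E]
    [NormedSpace ℝ E] [Nontrivial E] (R : ℝ) :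
    ∃ S₁ S₂ : Set E, ¬IsBounded S₁ ∧ ¬IsBounded S₂ ∧ S₁ ∩ S₂ = closedBall 0 R := by
  obtain ⟨u, hu⟩ := exists_ne (0 : E)
  have hrays : Disjoint ((fun t : ℝ => t • u) '' Ioi 0) ((fun t : ℝ => t • u) '' Iio 0) := by
    rw [Set.disjoint_left]
    rintro _ ⟨a, ha, rfl⟩ ⟨b, hb, hab⟩
    exact (hb.trans ha).ne (smul_left_injective ℝ hu hab)
  refine ⟨closedBall 0 R ∪ (fun t : ℝ => t • u) '' Ioi 0,
    closedBall 0 R ∪ (fun t : ℝ => t • u) '' Iio 0,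
    not_isBounded_of_forall_smul_mem hu fun t ht => Or.inr ⟨t, ht, rfl⟩,
    not_isBounded_of_forall_smul_mem (neg_ne_zero.2 hu) fun t ht => Or.inr ⟨-t, by simpa, by simp⟩,
    ?_⟩
  rw [← Set.union_inter_distrib_left, hrays.inter_eq, union_empty]

lemma abs_apply_sub_le_dist_single (θ : ellTwo) (i : ℕ) (c : ℝ) :
    |θ i - c| ≤ dist θ (lp.single 2 i c) := by
  have := lp.norm_apply_le_norm two_ne_zero (θ - lp.single 2 i c) i
  simpa [dist_eq_norm] using this

lemma sum_sq_apply_le_norm_sq (θ : ellTwo) (s : Finset ℕ) : ∑ i ∈ s, θ i ^ 2 ≤ ‖θ‖ ^ 2 := by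
  simpa [Real.rpow_two] using lp.sum_rpow_le_norm_rpow (p := 2) (by norm_num) θ s

lemma card_filter_dist_single_le {ε c : ℝ} (hεc : ε < c) (θ : ellTwo) (s : Finset ℕ) :
    #{i ∈ s | dist θ (lp.single 2 i c) ≤ ε} ≤ ⌈((c + ε) / (c - ε)) ^ 2⌉₊ := by
  set F := {i ∈ s | dist θ (lp.single 2 i c) ≤ ε}
  obtain hF | ⟨i₀, hi₀⟩ := F.eq_empty_or_nonempty
  · simp [hF]
  have hdist : ∀ i ∈ F, dist θ (lp.single 2 i c) ≤ ε := fun i hi => (mem_filter.1 hi).2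
  have hc : 0 < c := by linarith [dist_nonneg.trans (hdist i₀ hi₀)]
  have hcoord : ∀ i ∈ F, c - ε ≤ θ i := fun i hi => by
    linarith [(abs_le.1 ((abs_apply_sub_le_dist_single θ i c).trans (hdist i hi))).1]
  have hnorm : ‖θ‖ ≤ c + ε := by
    have := norm_sub_norm_le θ (lp.single 2 i₀ c)
    rw [lp.norm_single (by norm_num), Real.norm_of_nonneg hc.le, ← dist_eq_norm] at this
    linarith [hdist i₀ hi₀]
  have hsq : (#F : ℝ) * (c - ε) ^ 2 ≤ (c + ε) ^ 2 := calc
    (#F : ℝ) * (c - ε) ^ 2 = ∑ _i ∈ F, (c - ε) ^ 2 := by rw [sum_const, nsmul_eq_mul]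
    _ ≤ ∑ i ∈ F, θ i ^ 2 :=
      sum_le_sum fun i hi => pow_le_pow_left₀ (sub_nonneg.2 hεc.le) (hcoord i hi) 2
    _ ≤ ‖θ‖ ^ 2 := sum_sq_apply_le_norm_sq θ F
    _ ≤ (c + ε) ^ 2 := pow_le_pow_left₀ (norm_nonneg θ) hnorm 2
  have hF : (#F : ℝ) ≤ ((c + ε) / (c - ε)) ^ 2 := by
    rwa [div_pow, le_div_iff₀ (pow_pos (sub_pos.2 hεc) 2)]
  exact_mod_cast hF.trans (Nat.le_ceil _)

lemma exists_seq_norm_le_le_covN {ε c : ℝ} (hε : 0 < ε) (hεc : ε < c) (d : ℕ) :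
    ∃ x : ℕ → ellTwo, ∃ t, (∀ n, ‖x n‖ ≤ c) ∧ 0 ∈ prefSet x t ∧
      (d : ℕ∞) ≤ covN dist ε (prefSet x t) := by
  set K := ⌈((c + ε) / (c - ε)) ^ 2⌉₊
  have hK : 0 < K := Nat.ceil_pos.2 (pow_pos (div_pos (by linarith) (by linarith)) 2)
  refine ⟨fun n => if n = 0 then 0 else lp.single 2 n c, K * d + 1, fun n => ?_,
    ⟨0, by simp, if_pos rfl⟩, ?_⟩
  · dsimp only
    split_ifs
    · simpa using (hε.trans hεc).le
    · rw [lp.norm_single (by norm_num), Real.norm_of_nonneg (hε.trans hεc).le]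
  · refine le_covN_of_card_filter_le (fun i => lp.single 2 i c) (Ioo 0 (K * d + 1)) (fun i hi => ?_)
      hK (fun θ => card_filter_dist_single_le hεc θ _) (by simp)
    obtain ⟨hi0, hit⟩ := mem_Ioo.1 hi
    exact ⟨i, hit, if_neg hi0.ne'⟩

theorem exists_two_hypotheses_not_nonUnifGen_l2_general (r : ℝ)
    (ε ε' : ℝ) (hε : 0 < ε) (hεε' : ε < ε') :
    ∃ H : Set (ellTwo → Bool),
      (∃ h₁ h₂ : ellTwo → Bool, h₁ ≠ h₂ ∧ H = {h₁, h₂}) ∧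
      UUS dist H r ∧ ¬ NonUnifGen dist ε ε' H := by
  have : Nontrivial ellTwo := nontrivial_of_ne (lp.single 2 0 1) 0 <| by
    simp [← norm_ne_zero_iff, lp.norm_single]
  obtain ⟨S₁, S₂, hS₁, hS₂, hinter⟩ := exists_not_isBounded_inter_eq_closedBall (E := ellTwo) ε'
  refine ⟨{ofSet S₁, ofSet S₂}, ⟨_, _, fun heq => hS₁ ?_, rfl⟩, ?_, ?_⟩
  · have hS : S₁ ⊆ S₂ := by rw [← supp_ofSet S₁, heq, supp_ofSet]
    exact isBounded_closedBall.subset (hinter ▸ subset_inter subset_rfl hS)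
  · rintro _ (rfl | rfl)
    · rw [supp_ofSet]; exact covN_eq_top_of_not_isBounded hS₁ r
    · rw [supp_ofSet]; exact covN_eq_top_of_not_isBounded hS₂ r
  · refine not_nonUnifGen_pair_of_exists_seq fun d => ?_
    obtain ⟨x, t, hx, h0, hcov⟩ := exists_seq_norm_le_le_covN hε hεε' d
    rw [supp_ofSet, supp_ofSet, hinter]
    exact ⟨x, t, fun n => mem_closedBall_zero_iff.2 (hx n), hcov,
      fun v hv => mem_setBall_of_dist_le h0 (mem_closedBall'.1 hv)⟩

/-- in `ℓ²`, when `ε < ε'`, there is a two-hypothesis UUS class that is not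
`(ε, ε')`-non-uniformly generatable. -/
theorem exists_two_hypotheses_not_nonUnifGen_l2 (r : ℝ) (hr : 0 < r)
    (ε ε' : ℝ) (hε : 0 < ε) (hεε' : ε < ε') (hε'r : ε' ≤ r) :
    ∃ H : Set (ellTwo → Bool),
      (∃ h₁ h₂ : ellTwo → Bool, h₁ ≠ h₂ ∧ H = {h₁, h₂}) ∧
      UUS dist H r ∧ ¬ NonUnifGen dist ε ε' H :=
  exists_two_hypotheses_not_nonUnifGen_l2_general r ε ε' hε hεε'

end Gen
end
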